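/- arXiv:1910.03920 — 3 statements merged into one kernel-verified Lean document; each statement's English description precedes it below -/
import Mathlib

section
/- Let (X,d,μ) be a doubling metric measure space, 0<s<1, 0<p<∞ and 0<q≤∞. Then there exists a constant C₁ (depending only on s, p, q and the doubling constant) such that for every x ∈ X and every 0<r≤1, cap_{M^s_{p,q}}(B(x,r)) ≤ C₁·μ(B(x,r))/r^{sp}. -/
open MeasureTheory Metric Set Filter ENNReal

/-- The `γ`-median of `u` over `A` w.r.t. `μ`. -/
noncomputable def med {X : Type*} [MeasurableSpace X] (μ : Measure X) (γ : ℝ)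
    (u : X → ℝ) (A : Set X) : ℝ :=
  sSup {M : ℝ | μ {x ∈ A | u x < M} ≤ ENNReal.ofReal γ * μ A}

/-- `(g k)_{k ∈ ℤ}` is a fractional `s`-gradient of `u` in `S`. -/
def IsFracGradient {X : Type*} [MetricSpace X] [MeasurableSpace X] (μ : Measure X)
    (s : ℝ) (u : X → ℝ) (S : Set X) (g : ℤ → X → ℝ) : Prop :=
  (∀ k, Measurable (g k)) ∧ (∀ k x, 0 ≤ g k x) ∧
  ∃ E : Set X, E ⊆ S ∧ μ E = 0 ∧ ∀ k : ℤ, ∀ x ∈ S \ E, ∀ y ∈ S \ E,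
    (2:ℝ) ^ (k - 1) ≤ dist x y → dist x y < (2:ℝ) ^ k →
    |u x - u y| ≤ dist x y ^ s * (g k x + g k y)

/-- The `ℓ^q` norm of a sequence indexed by `ℤ`. -/
noncomputable def lqNormE (q : ℝ≥0∞) (f : ℤ → ℝ) : ℝ≥0∞ :=
  if q = ∞ then ⨆ k, ENNReal.ofReal |f k|
  else (∑' k, ENNReal.ofReal |f k| ^ q.toReal) ^ (1 / q.toReal)

/-- The `L^p(S, ℓ^q)` norm of a sequence of functions (w.r.t. the measure `μ`). -/
noncomputable def lpLqNorm {X : Type*} [MeasurableSpace X] (μ : Measure X)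
    (p q : ℝ≥0∞) (g : ℤ → X → ℝ) : ℝ≥0∞ :=
  if p = ∞ then essSup (fun x => lqNormE q fun k => g k x) μ
  else (∫⁻ x, (lqNormE q fun k => g k x) ^ p.toReal ∂μ) ^ (1 / p.toReal)

/-- The Hajłasz–Triebel–Lizorkin (quasi)norm of `u` on `S`. -/
noncomputable def tlNorm {X : Type*} [MetricSpace X] [MeasurableSpace X] (μ : Measure X)
    (s : ℝ) (p q : ℝ≥0∞) (S : Set X) (u : X → ℝ) : ℝ≥0∞ :=
  eLpNorm u p (μ.restrict S) +
    ⨅ (g : ℤ → X → ℝ) (_ : IsFracGradient μ s u S g), lpLqNorm (μ.restrict S) p q g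

/-- Membership in the Hajłasz–Triebel–Lizorkin space `M^s_{p,q}(S)`. -/
def MemTL {X : Type*} [MetricSpace X] [MeasurableSpace X] (μ : Measure X)
    (s : ℝ) (p q : ℝ≥0∞) (S : Set X) (u : X → ℝ) : Prop :=
  MemLp u p (μ.restrict S) ∧ tlNorm μ s p q S u < ∞

/-- The Triebel–Lizorkin capacity of `E ⊆ X`. -/
noncomputable def tlCapacity {X : Type*} [MetricSpace X] [MeasurableSpace X] (μ : Measure X)
    (s : ℝ) (p q : ℝ≥0∞) (E : Set X) : ℝ≥0∞ :=
  ⨅ (u : X → ℝ) (_ : MemTL μ s p q univ u)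
    (_ : ∃ U : Set X, IsOpen U ∧ E ⊆ U ∧ ∀ x ∈ U, 1 ≤ u x),
    tlNorm μ s p q univ u ^ p.toReal

/-- `μ` is a doubling measure: balls have positive finite measure and a doubling constant exists. -/
def IsDoubling {X : Type*} [MetricSpace X] [MeasurableSpace X] (μ : Measure X) : Prop :=
  (∀ (x : X) (r : ℝ), 0 < r → 0 < μ (ball x r) ∧ μ (ball x r) < ∞) ∧
  ∃ c : ℝ≥0∞, 1 ≤ c ∧ c < ∞ ∧ ∀ (x : X) (r : ℝ), 0 < r → μ (ball x (2*r)) ≤ c * μ (ball x r)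

/-- Generalized Hausdorff measure with a gauge assigning weight `h x r` to the ball `B(x,r)`. -/
noncomputable def hMeasureBall {X : Type*} [MetricSpace X] (h : X → ℝ → ℝ≥0∞) (E : Set X) : ℝ≥0∞ :=
  ⨆ (δ : ℝ) (_ : 0 < δ), ⨅ (c : ℕ → X) (r : ℕ → ℝ)
    (_ : E ⊆ ⋃ i, ball (c i) (r i)) (_ : ∀ i, 0 < r i ∧ r i ≤ δ),
    ∑' i, h (c i) (r i)

/-- Generalized Hausdorff measure with radius gauge `h`. -/
noncomputable def hMeasure {X : Type*} [MetricSpace X] (h : ℝ → ℝ≥0∞) (E : Set X) : ℝ≥0∞ :=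
  hMeasureBall (fun _ r => h r) E

/-!
Test the capacity of `B(x,r)` with the Lipschitz cutoff `u = clamp(2 - d(x,·)/r)`, which is `1` on
`B(x,r)` and vanishes off `B(x,2r)`. At scale `d ≈ 2^k` we have `|u y - u z| ≤ min(d/r, 1)`, and
`min(d/r, 1) ≤ (d/r)^s min(d/r, r/d)^ε` with `ε = min(s, 1-s) > 0`, so
`g_k = C r^{-s} 2^{-ε|k - k₀|} 1_{B(x,2r)}` (with `2^{k₀} ≈ r`) is a fractional `s`-gradient of `u`.
Its `ℓ^q` norm is a geometric series bounded by `C r^{-s}` uniformly in `x, r`, so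
`‖u‖_{M^s_{p,q}}^p ≲ r^{-sp} μ(B(x,2r))` (using `r ≤ 1` for the `L^p` part), and doubling
replaces `B(x,2r)` by `B(x,r)`.
-/

namespace lqNormE

variable {q : ℝ≥0∞}

theorem comp_sub (f : ℤ → ℝ) (k₀ : ℤ) : lqNormE q (fun k => f (k - k₀)) = lqNormE q f := by
  unfold lqNormE
  split_ifs
  · exact (Equiv.subRight k₀).iSup_comp (g := fun k => ENNReal.ofReal |f k|)
  · exact congrArg (· ^ _)
      ((Equiv.subRight k₀).tsum_eq fun k => ENNReal.ofReal |f k| ^ q.toReal)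

theorem const_mul (hq : q ≠ 0) (c : ℝ) (f : ℤ → ℝ) :
    lqNormE q (fun k => c * f k) = ENNReal.ofReal |c| * lqNormE q f := by
  unfold lqNormE
  simp_rw [abs_mul, ENNReal.ofReal_mul (abs_nonneg c)]
  split_ifs with hq_top
  · exact (ENNReal.mul_iSup _ _).symm
  · have hq_pos : 0 < q.toReal := ENNReal.toReal_pos hq hq_top
    simp_rw [ENNReal.mul_rpow_of_nonneg _ _ hq_pos.le, ENNReal.tsum_mul_left]
    rw [ENNReal.mul_rpow_of_nonneg _ _ (by positivity), one_div,
      ENNReal.rpow_rpow_inv hq_pos.ne']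

theorem zero (hq : q ≠ 0) : lqNormE q (fun _ => 0) = 0 := by
  simpa using const_mul hq 0 (fun _ => 0)

theorem geometric_lt_top (hq : q ≠ 0) {t : ℝ} (ht0 : 0 ≤ t) (ht1 : t < 1) :
    lqNormE q (fun k => t ^ k.natAbs) < ∞ := by
  unfold lqNormE
  split_ifs with hq_top
  · refine lt_of_le_of_lt (iSup_le fun k => ?_) ENNReal.one_lt_top
    rw [abs_of_nonneg (by positivity), ENNReal.ofReal_le_one]
    exact pow_le_one₀ ht0 ht1.le
  have hq_pos : 0 < q.toReal := ENNReal.toReal_pos hq hq_top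
  set a : ℝ≥0∞ := ENNReal.ofReal t ^ q.toReal
  have ha : a < 1 := ENNReal.rpow_lt_one (ENNReal.ofReal_lt_one.2 ht1) hq_pos
  have hterm : ∀ k : ℤ, ENNReal.ofReal |t ^ k.natAbs| ^ q.toReal = a ^ k.natAbs := by
    intro k
    rw [abs_of_nonneg (by positivity), ENNReal.ofReal_pow ht0, ← ENNReal.rpow_natCast,
      ← ENNReal.rpow_mul, mul_comm, ENNReal.rpow_mul, ENNReal.rpow_natCast]
  have hsum : ∑' k : ℤ, a ^ k.natAbs ≠ ∞ := by
    rw [tsum_of_nat_of_neg_add_one ENNReal.summable ENNReal.summable]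
    have hgeom : ∑' n : ℕ, a ^ n ≠ ∞ := by
      rw [ENNReal.tsum_geometric]
      exact ENNReal.inv_ne_top.2 (tsub_pos_of_lt ha).ne'
    refine ENNReal.add_ne_top.2 ⟨by simpa using hgeom, ?_⟩
    refine ne_top_of_le_ne_top hgeom (ENNReal.tsum_le_tsum fun n => ?_)
    rw [show (-((n : ℤ) + 1)).natAbs = n + 1 by omega]
    exact pow_le_pow_of_le_one zero_le ha.le n.le_succ
  simp_rw [hterm]
  exact ENNReal.rpow_lt_top_of_nonneg (by positivity) hsum

end lqNormE

theorem lpLqNorm_indicator_const {X : Type*} [MeasurableSpace X] {μ : Measure X}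
    {p q : ℝ≥0∞} {S : Set X} (hS : MeasurableSet S) (hp0 : p ≠ 0) (hp : p ≠ ∞) (hq : q ≠ 0)
    (c : ℤ → ℝ) :
    lpLqNorm μ p q (fun k => S.indicator fun _ => c k) =
      lqNormE q c * μ S ^ (1 / p.toReal) := by
  have hp_pos : 0 < p.toReal := ENNReal.toReal_pos hp0 hp
  have hpoint : ∀ y, (lqNormE q fun k => S.indicator (fun _ => c k) y) ^ p.toReal =
      S.indicator (fun _ => lqNormE q c ^ p.toReal) y := by
    intro y
    by_cases hy : y ∈ S
    · simp [hy]
    · simp [hy, lqNormE.zero hq, ENNReal.zero_rpow_of_pos hp_pos]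
  rw [lpLqNorm, if_neg hp, lintegral_congr hpoint,
    lintegral_indicator_const hS, ENNReal.mul_rpow_of_nonneg _ _ (by positivity), one_div,
    ENNReal.rpow_rpow_inv hp_pos.ne']

theorem min_one_le_rpow_mul_min_inv_rpow {a s ε : ℝ} (ha : 0 < a) (hεs : ε ≤ s)
    (hε : ε ≤ 1 - s) : min a 1 ≤ a ^ s * min a a⁻¹ ^ ε := by
  rcases le_total a 1 with ha1 | ha1
  · rw [min_eq_left ha1, min_eq_left (ha1.trans (one_le_inv₀ ha |>.2 ha1))]
    calc a = a ^ s * a ^ (1 - s) := by rw [← Real.rpow_add ha]; simp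
      _ ≤ a ^ s * a ^ ε :=
        mul_le_mul_of_nonneg_left (Real.rpow_le_rpow_of_exponent_ge ha ha1 hε) (by positivity)
  · rw [min_eq_right ha1, min_eq_right (inv_le_one_of_one_le₀ ha1 |>.trans ha1),
      Real.inv_rpow ha.le, ← Real.rpow_neg ha.le, ← Real.rpow_add ha]
    exact Real.one_le_rpow ha1 (by linarith)

theorem min_div_div_le_of_zpow_le {d r : ℝ} {k k₀ : ℤ} (hd : (2 : ℝ) ^ (k - 1) ≤ d)
    (hd' : d < (2 : ℝ) ^ k) (hr : (2 : ℝ) ^ (k₀ - 1) < r) (hr' : r ≤ (2 : ℝ) ^ k₀) :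
    min (d / r) (r / d) ≤ 2 * 2⁻¹ ^ (k - k₀).natAbs := by
  have hd0 : 0 < d := (_root_.zpow_pos two_pos _).trans_le hd
  have hr0 : 0 < r := (_root_.zpow_pos two_pos _).trans hr
  have htwo : (2 : ℝ) * 2⁻¹ ^ (k - k₀).natAbs = 2 ^ (1 - |k - k₀|) := by
    rw [zpow_sub₀ two_ne_zero, zpow_one, ← Int.natCast_natAbs, zpow_natCast, inv_pow,
      div_eq_mul_inv]
  rw [htwo]
  rcases le_total k₀ k with hk | hk
  · calc min (d / r) (r / d) ≤ r / d := min_le_right _ _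
      _ ≤ 2 ^ k₀ / 2 ^ (k - 1) := by gcongr
      _ = 2 ^ (1 - |k - k₀|) := by
        rw [← zpow_sub₀ two_ne_zero, abs_of_nonneg (sub_nonneg.2 hk)]; ring_nf
  · calc min (d / r) (r / d) ≤ d / r := min_le_left _ _
      _ ≤ 2 ^ k / 2 ^ (k₀ - 1) := by gcongr
      _ = 2 ^ (1 - |k - k₀|) := by
        rw [← zpow_sub₀ two_ne_zero, abs_of_nonpos (sub_nonpos.2 hk)]; ring_nf

theorem min_div_one_le_of_zpow_le {d r s ε : ℝ} {k k₀ : ℤ} (hεs : ε ≤ s) (hε : ε ≤ 1 - s)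
    (hε0 : 0 ≤ ε) (hd : (2 : ℝ) ^ (k - 1) ≤ d) (hd' : d < (2 : ℝ) ^ k)
    (hr : (2 : ℝ) ^ (k₀ - 1) < r) (hr' : r ≤ (2 : ℝ) ^ k₀) :
    min (d / r) 1 ≤ d ^ s * (2 * r ^ (-s) * ((2⁻¹ : ℝ) ^ ε) ^ (k - k₀).natAbs) := by
  have hd0 : 0 < d := (_root_.zpow_pos two_pos _).trans_le hd
  have hr0 : 0 < r := (_root_.zpow_pos two_pos _).trans hr
  have hscale : min (d / r) (r / d) ^ ε ≤ 2 * ((2⁻¹ : ℝ) ^ ε) ^ (k - k₀).natAbs := by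
    calc min (d / r) (r / d) ^ ε ≤ (2 * 2⁻¹ ^ (k - k₀).natAbs) ^ ε := by
          gcongr
          exact min_div_div_le_of_zpow_le hd hd' hr hr'
      _ = 2 ^ ε * ((2⁻¹ : ℝ) ^ ε) ^ (k - k₀).natAbs := by
          rw [Real.mul_rpow two_pos.le (by positivity), Real.rpow_pow_comm (by norm_num)]
      _ ≤ 2 * ((2⁻¹ : ℝ) ^ ε) ^ (k - k₀).natAbs := by
          gcongr
          exact Real.rpow_le_self_of_one_le one_le_two (by linarith)
  calc min (d / r) 1 ≤ (d / r) ^ s * min (d / r) (d / r)⁻¹ ^ ε :=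
        min_one_le_rpow_mul_min_inv_rpow (div_pos hd0 hr0) hεs hε
    _ ≤ d ^ s * r ^ (-s) * (2 * ((2⁻¹ : ℝ) ^ ε) ^ (k - k₀).natAbs) := by
        rw [inv_div, Real.div_rpow hd0.le hr0.le, Real.rpow_neg hr0.le, div_eq_mul_inv]
        gcongr
    _ = _ := by ring

section ballCutoff

variable {X : Type*} [MetricSpace X]

noncomputable def ballCutoff (x : X) (r : ℝ) (y : X) : ℝ :=
  projIcc (0 : ℝ) 1 zero_le_one (2 - dist x y / r)

variable {x : X} {r : ℝ}

theorem ballCutoff_nonneg (y : X) : 0 ≤ ballCutoff x r y := (projIcc 0 1 _ _).2.1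

theorem ballCutoff_le_one (y : X) : ballCutoff x r y ≤ 1 := (projIcc 0 1 _ _).2.2

theorem ballCutoff_of_mem_ball (hr : 0 < r) {y : X} (hy : y ∈ ball x r) :
    ballCutoff x r y = 1 := by
  rw [mem_ball', ← div_lt_one hr] at hy
  rw [ballCutoff, projIcc_of_right_le _ (by linarith)]

theorem ballCutoff_of_notMem_ball (hr : 0 < r) {y : X} (hy : y ∉ ball x (2 * r)) :
    ballCutoff x r y = 0 := by
  rw [mem_ball', not_lt, ← le_div_iff₀ hr] at hy
  rw [ballCutoff, projIcc_of_le_left _ (by linarith)]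

theorem abs_ballCutoff_sub_le (hr : 0 < r) (y z : X) :
    |ballCutoff x r y - ballCutoff x r z| ≤ min (dist y z / r) 1 := by
  refine le_min ?_ (abs_sub_le_iff.2 ⟨?_, ?_⟩)
  · calc |ballCutoff x r y - ballCutoff x r z| ≤ |(2 - dist x y / r) - (2 - dist x z / r)| :=
          abs_projIcc_sub_projIcc _
      _ = |dist x z - dist x y| / r := by
          rw [← abs_of_pos hr, ← abs_div, abs_of_pos hr]; ring_nf
      _ ≤ dist y z / r := by
          gcongr
          rw [dist_comm x z, dist_comm x y, dist_comm y z]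
          exact abs_dist_sub_le z y x
  all_goals linarith [ballCutoff_nonneg (x := x) (r := r) y,
    ballCutoff_nonneg (x := x) (r := r) z, ballCutoff_le_one (x := x) (r := r) y,
    ballCutoff_le_one (x := x) (r := r) z]

theorem continuous_ballCutoff : Continuous (ballCutoff x r) :=
  continuous_subtype_val.comp <| continuous_projIcc.comp <|
    continuous_const.sub ((continuous_const.dist continuous_id).div_const r)

theorem eLpNorm_ballCutoff_le [MeasurableSpace X] [OpensMeasurableSpace X] (μ : Measure X)
    {p : ℝ≥0∞} (hp0 : p ≠ 0) (hp : p ≠ ∞) (hr : 0 < r) :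
    eLpNorm (ballCutoff x r) p μ ≤ μ (ball x (2 * r)) ^ (1 / p.toReal) := by
  have hbound : ∀ y, ‖ballCutoff x r y‖ ≤ (ball x (2 * r)).indicator (fun _ => (1 : ℝ)) y := by
    intro y
    rw [Real.norm_of_nonneg (ballCutoff_nonneg y)]
    by_cases hy : y ∈ ball x (2 * r)
    · simpa [hy] using ballCutoff_le_one y
    · simp [hy, ballCutoff_of_notMem_ball hr hy]
  refine (eLpNorm_mono_real hbound).trans ?_
  rw [eLpNorm_indicator_const measurableSet_ball hp0 hp]
  simp

end ballCutoff

section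

variable {X : Type*} [MetricSpace X] [MeasurableSpace X] {μ : Measure X} {s : ℝ}
  {p q : ℝ≥0∞}

theorem isFracGradient_indicator_const [OpensMeasurableSpace X] {u : X → ℝ} {S : Set X}
    (hS : MeasurableSet S) {c : ℤ → ℝ} (hc : ∀ k, 0 ≤ c k) (hu : ∀ y ∉ S, u y = 0)
    (h : ∀ k y z, (2 : ℝ) ^ (k - 1) ≤ dist y z → dist y z < (2 : ℝ) ^ k →
      |u y - u z| ≤ dist y z ^ s * c k) :
    IsFracGradient μ s u univ fun k => S.indicator fun _ => c k := by
  refine ⟨fun k => measurable_const.indicator hS, fun k => indicator_nonneg fun _ _ => hc k,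
    ∅, empty_subset _, measure_empty, fun k y _ z _ hk hk' => ?_⟩
  have hind : ∀ w, 0 ≤ S.indicator (fun _ => c k) w := indicator_nonneg fun _ _ => hc k
  by_cases hyz : y ∈ S ∨ z ∈ S
  · refine (h k y z hk hk').trans (mul_le_mul_of_nonneg_left ?_ (by positivity))
    rcases hyz with hy | hz
    · simpa [hy] using hind z
    · simpa [hz] using hind y
  · obtain ⟨hy, hz⟩ := not_or.1 hyz
    rw [hu y hy, hu z hz, sub_zero, abs_zero]
    exact mul_nonneg (by positivity) (add_nonneg (hind y) (hind z))

theorem isFracGradient_ballCutoff [OpensMeasurableSpace X] {ε : ℝ} (hε0 : 0 ≤ ε)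
    (hεs : ε ≤ s) (hε : ε ≤ 1 - s) {x : X} {r : ℝ} (hr0 : 0 < r) :
    IsFracGradient μ s (ballCutoff x r) univ fun k => (ball x (2 * r)).indicator fun _ =>
      2 * r ^ (-s) * ((2⁻¹ : ℝ) ^ ε) ^ (k - Int.clog 2 r).natAbs := by
  have hlt := Int.zpow_pred_clog_lt_self (R := ℝ) one_lt_two hr0
  have hle := Int.self_le_zpow_clog (R := ℝ) one_lt_two r
  push_cast at hlt hle
  exact isFracGradient_indicator_const measurableSet_ball (fun k => by positivity)
    (fun y => ballCutoff_of_notMem_ball hr0) fun k y z hk hk' =>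
      (abs_ballCutoff_sub_le hr0 y z).trans (min_div_one_le_of_zpow_le hεs hε hε0 hk hk' hlt hle)

theorem tlCapacity_le_of_isFracGradient {E U : Set X} {u : X → ℝ} {g : ℤ → X → ℝ}
    (hU : IsOpen U) (hEU : E ⊆ U) (hu1 : ∀ y ∈ U, 1 ≤ u y) (hu : AEStronglyMeasurable u μ)
    (hg : IsFracGradient μ s u univ g) (hfin : eLpNorm u p μ + lpLqNorm μ p q g < ∞) :
    tlCapacity μ s p q E ≤ (eLpNorm u p μ + lpLqNorm μ p q g) ^ p.toReal := by
  have hnorm : tlNorm μ s p q univ u ≤ eLpNorm u p μ + lpLqNorm μ p q g := by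
    rw [tlNorm, Measure.restrict_univ]
    gcongr
    exact iInf₂_le g hg
  have hmem : MemTL μ s p q univ u := by
    rw [MemTL, Measure.restrict_univ]
    exact ⟨⟨hu, lt_of_le_of_lt le_self_add hfin⟩, hnorm.trans_lt hfin⟩
  calc tlCapacity μ s p q E ≤ tlNorm μ s p q univ u ^ p.toReal :=
        iInf_le_of_le u <| iInf_le_of_le hmem <| iInf_le _ ⟨U, hU, hEU, hu1⟩
    _ ≤ _ := ENNReal.rpow_le_rpow hnorm ENNReal.toReal_nonneg

end

theorem tlCapacity_ball_le_measure_ball_two_mul {X : Type*} [MetricSpace X] [MeasurableSpace X]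
    [OpensMeasurableSpace X] (μ : Measure X) {s ε : ℝ} {p q : ℝ≥0∞} (hε0 : 0 < ε) (hεs : ε ≤ s)
    (hε : ε ≤ 1 - s) (hp0 : p ≠ 0) (hp : p ≠ ∞) (hq : q ≠ 0) {x : X} {r : ℝ} (hr0 : 0 < r)
    (hr1 : r ≤ 1) (hμ : μ (ball x (2 * r)) ≠ ∞) :
    tlCapacity μ s p q (ball x r) ≤
      (1 + 2 * lqNormE q fun k => ((2⁻¹ : ℝ) ^ ε) ^ k.natAbs) ^ p.toReal *
        (μ (ball x (2 * r)) / ENNReal.ofReal (r ^ (s * p.toReal))) := by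
  set t : ℝ := (2⁻¹ : ℝ) ^ ε
  set K := lqNormE q fun k => t ^ k.natAbs
  set g : ℤ → X → ℝ := fun k =>
    (ball x (2 * r)).indicator fun _ => 2 * r ^ (-s) * t ^ (k - Int.clog 2 r).natAbs
  set R := ENNReal.ofReal (r ^ (-s))
  set V := μ (ball x (2 * r)) ^ (1 / p.toReal)
  have hp_pos : 0 < p.toReal := ENNReal.toReal_pos hp0 hp
  have hK : K < ∞ := lqNormE.geometric_lt_top hq (by positivity)
    (Real.rpow_lt_one (by norm_num) (by norm_num) hε0)
  have hR : 1 ≤ R := ENNReal.one_le_ofReal.2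
    (Real.one_le_rpow_of_pos_of_le_one_of_nonpos hr0 hr1 (by linarith))
  have hg : IsFracGradient μ s (ballCutoff x r) univ g :=
    isFracGradient_ballCutoff hε0.le hεs hε hr0
  have hgnorm : lpLqNorm μ p q g = 2 * R * K * V := by
    rw [lpLqNorm_indicator_const measurableSet_ball hp0 hp hq,
      lqNormE.comp_sub (fun k => 2 * r ^ (-s) * t ^ k.natAbs) (Int.clog 2 r), lqNormE.const_mul hq,
      abs_of_nonneg (by positivity), ENNReal.ofReal_mul zero_le_two, ENNReal.ofReal_ofNat]
  have hsum : eLpNorm (ballCutoff x r) p μ + lpLqNorm μ p q g ≤ (1 + 2 * K) * R * V := by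
    calc eLpNorm (ballCutoff x r) p μ + lpLqNorm μ p q g ≤ R * V + 2 * R * K * V := by
          rw [hgnorm]
          gcongr
          exact (eLpNorm_ballCutoff_le μ hp0 hp hr0).trans (le_mul_of_one_le_left zero_le hR)
      _ = (1 + 2 * K) * R * V := by ring
  have hRp : R ^ p.toReal = (ENNReal.ofReal (r ^ (s * p.toReal)))⁻¹ := by
    rw [ENNReal.ofReal_rpow_of_pos (by positivity), ← Real.rpow_mul hr0.le, neg_mul,
      Real.rpow_neg hr0.le, ENNReal.ofReal_inv_of_pos (by positivity)]
  have hVp : V ^ p.toReal = μ (ball x (2 * r)) := by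
    simp only [V, one_div]
    exact ENNReal.rpow_inv_rpow hp_pos.ne' _
  calc tlCapacity μ s p q (ball x r)
      ≤ (eLpNorm (ballCutoff x r) p μ + lpLqNorm μ p q g) ^ p.toReal :=
        tlCapacity_le_of_isFracGradient isOpen_ball subset_rfl
          (fun y hy => (ballCutoff_of_mem_ball hr0 hy).ge)
          continuous_ballCutoff.aestronglyMeasurable hg
          (hsum.trans_lt (by finiteness))
    _ ≤ ((1 + 2 * K) * R * V) ^ p.toReal := by gcongr
    _ = (1 + 2 * K) ^ p.toReal * (μ (ball x (2 * r)) / ENNReal.ofReal (r ^ (s * p.toReal))) := by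
        rw [ENNReal.mul_rpow_of_nonneg _ _ hp_pos.le, ENNReal.mul_rpow_of_nonneg _ _ hp_pos.le,
          hRp, hVp, div_eq_mul_inv]
        ring

/-- `cap_{M^s_{p,q}}(B(x,r)) ≤ C₁ μ(B(x,r)) / r^{sp}` for `0 < r ≤ 1`. -/
theorem capacity_ball_le {X : Type*} [MetricSpace X] [MeasurableSpace X] [BorelSpace X]
    (μ : Measure X) (hd : IsDoubling μ)
    (s : ℝ) (p q : ℝ≥0∞) (hs0 : 0 < s) (hs1 : s < 1)
    (hp0 : 0 < p) (hpfin : p ≠ ∞) (hq0 : 0 < q) :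
    ∃ C₁ : ℝ≥0∞, 0 < C₁ ∧ C₁ < ∞ ∧ ∀ (x : X) (r : ℝ), 0 < r → r ≤ 1 →
      tlCapacity μ s p q (ball x r) ≤
        C₁ * (μ (ball x r) / ENNReal.ofReal (r ^ (s * p.toReal))) := by
  obtain ⟨hball, c, hc1, hc, hdouble⟩ := hd
  set ε := min s (1 - s)
  have hε0 : 0 < ε := lt_min hs0 (by linarith)
  set K := lqNormE q fun k => ((2⁻¹ : ℝ) ^ ε) ^ k.natAbs
  have hK : K < ∞ := lqNormE.geometric_lt_top hq0.ne' (by positivity)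
    (Real.rpow_lt_one (by norm_num) (by norm_num) hε0)
  refine ⟨(1 + 2 * K) ^ p.toReal * c, ?_, by finiteness, fun x r hr0 hr1 => ?_⟩
  · exact ENNReal.mul_pos (ENNReal.rpow_pos (by positivity) (by finiteness)).ne'
      (zero_lt_one.trans_le hc1).ne'
  calc tlCapacity μ s p q (ball x r)
      ≤ (1 + 2 * K) ^ p.toReal * (μ (ball x (2 * r)) / ENNReal.ofReal (r ^ (s * p.toReal))) :=
        tlCapacity_ball_le_measure_ball_two_mul μ hε0 (min_le_left _ _) (min_le_right _ _)
          hp0.ne' hpfin hq0.ne' hr0 hr1 (hball x (2 * r) (by positivity)).2.ne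
    _ ≤ (1 + 2 * K) ^ p.toReal * (c * μ (ball x r) / ENNReal.ofReal (r ^ (s * p.toReal))) := by
        gcongr
        exact hdouble x r hr0
    _ = _ := by rw [mul_div_assoc, mul_assoc]
end

section
/- Let s,p ∈ (0,1), n ∈ ℕ, 0<γ≤1/2, and let u be a measurable, almost everywhere finite function on ℝ^n. Then there is a constant C (depending only on n, p, γ) such that for every j ∈ ℕ and every x ∈ ℝ^n at which u(x) is finite, ⨍_{B(x,2^{−j})} |u(z) − m_u^γ(B(x,2^{−j}))|^p dz ≤ C·2^{−jsp}·∫_{B(x,2^{−j})} |u(z)−u(x)|^p/|z−x|^{n+sp} dz. -/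
/-!
The `γ`-median `m` of `u` over `A` satisfies `|{u < m}| ≤ γ|A| ≤ |{u ≤ m}|`, so for every constant
`c` a `γ`-portion of `A` has `|u - c| ≥ |m - c|`, and Chebyshev gives
`γ|A| |m - c|^p ≤ ∫_A |u - c|^p`. As `t ↦ t^p` is subadditive for `p ≤ 1`, this yields
`∫_A |u - m|^p ≤ (1 + γ⁻¹) ∫_A |u - c|^p`. Take `A = B(x, r)` and `c = u(x)`, insert
`1 ≤ (r / |z - x|)^(n + sp)` in the integrand and divide by `|B(x, r)| = r^n |B(0, 1)|`.
-/

open MeasureTheory Metric Set Filter ENNReal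

theorem monotone_setOf_lt {X : Type*} (u : X → ℝ) (A : Set X) :
    Monotone fun M : ℝ => {x ∈ A | u x < M} :=
  fun _ _ hMM' _ hx => ⟨hx.1, hx.2.trans_le hMM'⟩

theorem rpow_abs_sub_le_add {p : ℝ} (hp0 : 0 ≤ p) (hp1 : p ≤ 1) (a b c : ℝ) :
    |a - b| ^ p ≤ |a - c| ^ p + |b - c| ^ p := by
  rw [abs_sub_comm b c]
  exact (Real.rpow_le_rpow (abs_nonneg _) (abs_sub_le a c b) hp0).trans
    (Real.rpow_add_le_add_rpow (abs_nonneg _) (abs_nonneg _) hp0 hp1)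

section Median

variable {X : Type*} [MeasurableSpace X] {μ : Measure X} {γ : ℝ} {u : X → ℝ} {A : Set X}

-- `med` is an `sSup`, hence a junk value unless its defining set is nonempty and bounded above.
theorem exists_measure_setOf_lt_le (hu : Measurable u) (hA : MeasurableSet A) (hA0 : μ A ≠ 0)
    (hA_top : μ A ≠ ∞) (hγ : 0 < γ) :
    ∃ M : ℝ, μ {x ∈ A | u x < M} ≤ ENNReal.ofReal γ * μ A := by
  have hinter : ⋂ M : ℝ, {x ∈ A | u x < M} = ∅ :=
    eq_empty_of_forall_notMem fun x hx => lt_irrefl _ (mem_iInter.1 hx (u x)).2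
  have hlim := (monotone_setOf_lt u A).measure_iInter (μ := μ)
    (fun M => (hA.inter (hu measurableSet_Iio)).nullMeasurableSet)
    ⟨0, ne_top_of_le_ne_top hA_top (measure_mono fun x hx => hx.1)⟩
  rw [hinter, measure_empty] at hlim
  have hpos : 0 < ENNReal.ofReal γ * μ A :=
    ENNReal.mul_pos (ENNReal.ofReal_pos.2 hγ).ne' hA0
  obtain ⟨M, hM⟩ := iInf_lt_iff.1 (hlim ▸ hpos)
  exact ⟨M, hM.le⟩

theorem bddAbove_setOf_measure_lt_le (hA0 : μ A ≠ 0) (hA_top : μ A ≠ ∞) (hγ : γ < 1) :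
    BddAbove {M : ℝ | μ {x ∈ A | u x < M} ≤ ENNReal.ofReal γ * μ A} := by
  have hunion : ⋃ M : ℝ, {x ∈ A | u x < M} = A :=
    Subset.antisymm (iUnion_subset fun _ _ hx => hx.1)
      fun x hx => mem_iUnion.2 ⟨u x + 1, hx, lt_add_one _⟩
  have hlt : ENNReal.ofReal γ * μ A < μ A := by
    conv_rhs => rw [← one_mul (μ A)]
    exact (ENNReal.mul_lt_mul_iff_left hA0 hA_top).2 (ENNReal.ofReal_lt_one.2 hγ)
  obtain ⟨M, hM⟩ := lt_iSup_iff.1 <| (monotone_setOf_lt u A).measure_iUnion (μ := μ) ▸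
    hlt.trans_eq (congrArg μ hunion.symm)
  refine ⟨M, fun M' hM' => le_of_not_gt fun hMM' => ?_⟩
  exact (hM.trans_le (measure_mono (monotone_setOf_lt u A hMM'.le))).not_ge hM'

theorem measure_setOf_lt_le_of_lt_med
    (hne : ∃ M : ℝ, μ {x ∈ A | u x < M} ≤ ENNReal.ofReal γ * μ A) {M : ℝ}
    (hM : M < med μ γ u A) : μ {x ∈ A | u x < M} ≤ ENNReal.ofReal γ * μ A := by
  obtain ⟨M', hM'S, hMM'⟩ := exists_lt_of_lt_csSup hne hM
  exact (measure_mono (monotone_setOf_lt u A hMM'.le)).trans hM'S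

theorem lt_measure_setOf_lt_of_med_lt
    (hbdd : BddAbove {M : ℝ | μ {x ∈ A | u x < M} ≤ ENNReal.ofReal γ * μ A})
    {M : ℝ} (hM : med μ γ u A < M) : ENNReal.ofReal γ * μ A < μ {x ∈ A | u x < M} :=
  lt_of_not_ge fun hMS => (le_csSup hbdd hMS).not_gt hM

theorem measure_setOf_lt_med_le (hu : Measurable u) (hA : MeasurableSet A) (hA0 : μ A ≠ 0)
    (hA_top : μ A ≠ ∞) (hγ : 0 < γ) :
    μ {x ∈ A | u x < med μ γ u A} ≤ ENNReal.ofReal γ * μ A := by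
  set m := med μ γ u A
  have hmono : Monotone fun k : ℕ => {x ∈ A | u x < m - 1 / (k + 1)} := fun k l hkl =>
    monotone_setOf_lt u A (sub_le_sub_left (Nat.one_div_le_one_div hkl) m)
  have hunion : ⋃ k : ℕ, {x ∈ A | u x < m - 1 / (k + 1)} = {x ∈ A | u x < m} := by
    refine Subset.antisymm (iUnion_subset fun k x hx =>
      ⟨hx.1, hx.2.trans (sub_lt_self m Nat.one_div_pos_of_nat)⟩) fun x hx => ?_
    obtain ⟨k, hk⟩ := exists_nat_one_div_lt (sub_pos.2 hx.2)
    exact mem_iUnion.2 ⟨k, hx.1, by linarith⟩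
  rw [← hunion, hmono.measure_iUnion]
  exact iSup_le fun k => measure_setOf_lt_le_of_lt_med
    (exists_measure_setOf_lt_le hu hA hA0 hA_top hγ) (sub_lt_self m Nat.one_div_pos_of_nat)

theorem le_measure_setOf_le_med (hu : Measurable u) (hA : MeasurableSet A) (hA0 : μ A ≠ 0)
    (hA_top : μ A ≠ ∞) (hγ : γ < 1) :
    ENNReal.ofReal γ * μ A ≤ μ {x ∈ A | u x ≤ med μ γ u A} := by
  set m := med μ γ u A
  have hanti : Antitone fun k : ℕ => {x ∈ A | u x < m + 1 / (k + 1)} := fun k l hkl =>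
    monotone_setOf_lt u A (add_le_add_right (Nat.one_div_le_one_div hkl) m)
  have hinter : ⋂ k : ℕ, {x ∈ A | u x < m + 1 / (k + 1)} = {x ∈ A | u x ≤ m} := by
    refine Subset.antisymm
      (fun x hx => ⟨(mem_iInter.1 hx 0).1, le_of_forall_pos_lt_add fun ε hε => ?_⟩)
      fun x hx => mem_iInter.2 fun k =>
        ⟨hx.1, hx.2.trans_lt (lt_add_of_pos_right m Nat.one_div_pos_of_nat)⟩
    obtain ⟨k, hk⟩ := exists_nat_one_div_lt hε
    exact (mem_iInter.1 hx k).2.trans (by linarith)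
  rw [← hinter, hanti.measure_iInter
    (fun k => (hA.inter (hu measurableSet_Iio)).nullMeasurableSet)
    ⟨0, ne_top_of_le_ne_top hA_top (measure_mono fun x hx => hx.1)⟩]
  exact le_iInf fun k => (lt_measure_setOf_lt_of_med_lt (bddAbove_setOf_measure_lt_le hA0 hA_top hγ)
    (lt_add_of_pos_right m Nat.one_div_pos_of_nat)).le

theorem le_measure_setOf_abs_sub_med_le (hu : Measurable u) (hA : MeasurableSet A)
    (hA0 : μ A ≠ 0) (hA_top : μ A ≠ ∞) (hγ0 : 0 < γ) (hγ : γ ≤ 1 / 2) (c : ℝ) :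
    ENNReal.ofReal γ * μ A ≤ μ {x ∈ A | |med μ γ u A - c| ≤ |u x - c|} := by
  set m := med μ γ u A
  rcases le_or_gt c m with hcm | hmc
  · -- at most a `γ`-portion of `A` lies below `m`, so a `(1 - γ) ≥ γ`-portion lies above it
    have hcover : A ⊆ {x ∈ A | u x < m} ∪ {x ∈ A | |m - c| ≤ |u x - c|} := fun x hx => by
      refine (lt_or_ge (u x) m).imp (fun h => ⟨hx, h⟩) fun h => ⟨hx, ?_⟩
      rw [abs_of_nonneg (sub_nonneg.2 hcm), abs_of_nonneg (by linarith)]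
      linarith
    have htwice : ENNReal.ofReal γ * μ A + ENNReal.ofReal γ * μ A ≤ μ A := by
      rw [← add_mul, ← ENNReal.ofReal_add hγ0.le hγ0.le]
      exact mul_le_of_le_one_left' (ENNReal.ofReal_le_one.2 (by linarith))
    have hγA : ENNReal.ofReal γ * μ A ≠ ∞ := ENNReal.mul_ne_top ENNReal.ofReal_ne_top hA_top
    refine (ENNReal.add_le_add_iff_left hγA).1 ?_
    calc ENNReal.ofReal γ * μ A + ENNReal.ofReal γ * μ A ≤ μ A := htwice
      _ ≤ μ {x ∈ A | u x < m} + μ {x ∈ A | |m - c| ≤ |u x - c|} :=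
        (measure_mono hcover).trans (measure_union_le _ _)
      _ ≤ _ := add_le_add_left (measure_setOf_lt_med_le hu hA hA0 hA_top hγ0) _
  · refine (le_measure_setOf_le_med hu hA hA0 hA_top (by linarith)).trans
      (measure_mono fun x hx => ⟨hx.1, ?_⟩)
    rw [abs_of_neg (sub_neg.2 hmc), abs_of_neg (by linarith [hx.2])]
    linarith [hx.2]

theorem ofReal_rpow_abs_sub_med_mul_le (hu : Measurable u) (hA : MeasurableSet A)
    (hA0 : μ A ≠ 0) (hA_top : μ A ≠ ∞) (hγ0 : 0 < γ) (hγ : γ ≤ 1 / 2) {p : ℝ} (hp : 0 ≤ p)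
    (c : ℝ) :
    ENNReal.ofReal (|med μ γ u A - c| ^ p) * (ENNReal.ofReal γ * μ A) ≤
      ∫⁻ x in A, ENNReal.ofReal (|u x - c| ^ p) ∂μ := by
  set t := ENNReal.ofReal (|med μ γ u A - c| ^ p)
  calc t * (ENNReal.ofReal γ * μ A)
      ≤ t * μ {x ∈ A | |med μ γ u A - c| ≤ |u x - c|} := by
        gcongr
        exact le_measure_setOf_abs_sub_med_le hu hA hA0 hA_top hγ0 hγ c
    _ ≤ t * μ.restrict A {x | t ≤ ENNReal.ofReal (|u x - c| ^ p)} := by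
        rw [Measure.restrict_apply' hA]
        gcongr
        exact fun x hx =>
          ⟨ENNReal.ofReal_le_ofReal (Real.rpow_le_rpow (abs_nonneg _) hx.2 hp), hx.1⟩
    _ ≤ ∫⁻ x in A, ENNReal.ofReal (|u x - c| ^ p) ∂μ :=
        mul_meas_ge_le_lintegral₀ (by fun_prop) t

theorem setLIntegral_rpow_abs_sub_med_le (hu : Measurable u) (hA : MeasurableSet A)
    (hA0 : μ A ≠ 0) (hA_top : μ A ≠ ∞) (hγ0 : 0 < γ) (hγ : γ ≤ 1 / 2) {p : ℝ} (hp0 : 0 ≤ p)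
    (hp1 : p ≤ 1) (c : ℝ) :
    ∫⁻ x in A, ENNReal.ofReal (|u x - med μ γ u A| ^ p) ∂μ ≤
      ENNReal.ofReal (1 + γ⁻¹) * ∫⁻ x in A, ENNReal.ofReal (|u x - c| ^ p) ∂μ := by
  set m := med μ γ u A
  set I := ∫⁻ x in A, ENNReal.ofReal (|u x - c| ^ p) ∂μ
  have hγ' : (ENNReal.ofReal γ)⁻¹ * ENNReal.ofReal γ = 1 :=
    ENNReal.inv_mul_cancel (ENNReal.ofReal_pos.2 hγ0).ne' ENNReal.ofReal_ne_top
  have hmed : ENNReal.ofReal (|m - c| ^ p) * μ A ≤ ENNReal.ofReal γ⁻¹ * I := by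
    calc ENNReal.ofReal (|m - c| ^ p) * μ A
        = (ENNReal.ofReal γ)⁻¹ * (ENNReal.ofReal (|m - c| ^ p) * (ENNReal.ofReal γ * μ A)) := by
          rw [mul_left_comm, ← mul_assoc (ENNReal.ofReal γ)⁻¹, hγ', one_mul]
      _ ≤ ENNReal.ofReal γ⁻¹ * I := by
          rw [ENNReal.ofReal_inv_of_pos hγ0]
          gcongr
          exact ofReal_rpow_abs_sub_med_mul_le hu hA hA0 hA_top hγ0 hγ hp0 c
  calc ∫⁻ x in A, ENNReal.ofReal (|u x - m| ^ p) ∂μ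
      ≤ ∫⁻ x in A, (ENNReal.ofReal (|u x - c| ^ p) + ENNReal.ofReal (|m - c| ^ p)) ∂μ :=
        lintegral_mono fun x =>
          (ENNReal.ofReal_le_ofReal (rpow_abs_sub_le_add hp0 hp1 _ _ c)).trans
            ENNReal.ofReal_add_le
    _ = I + ENNReal.ofReal (|m - c| ^ p) * μ A := by
        rw [lintegral_add_right _ measurable_const, setLIntegral_const]
    _ ≤ I + ENNReal.ofReal γ⁻¹ * I := by gcongr
    _ = ENNReal.ofReal (1 + γ⁻¹) * I := by
        rw [ENNReal.ofReal_add zero_le_one (inv_nonneg.2 hγ0.le), ENNReal.ofReal_one, add_mul,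
          one_mul]

end Median

theorem setLIntegral_ball_le_rpow_mul {X : Type*} [MetricSpace X] [MeasurableSpace X]
    [OpensMeasurableSpace X] (μ : Measure X) {x : X} {r α : ℝ} (hα : 0 ≤ α) {f : X → ℝ}
    (hfx : f x = 0) :
    ∫⁻ z in ball x r, ENNReal.ofReal (f z) ∂μ ≤
      ENNReal.ofReal (r ^ α) * ∫⁻ z in ball x r, ENNReal.ofReal (f z / dist z x ^ α) ∂μ := by
  rw [← lintegral_const_mul' _ _ ENNReal.ofReal_ne_top]
  refine setLIntegral_mono' measurableSet_ball fun z hz => ?_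
  rcases le_or_gt (f z) 0 with hfz | hfz
  · rw [ENNReal.ofReal_of_nonpos hfz]
    exact zero_le
  have hd : 0 < dist z x := dist_pos.2 fun hzx : z = x => hfz.ne' (hzx ▸ hfx)
  have hdα : 0 < dist z x ^ α := Real.rpow_pos_of_pos hd α
  rw [← ENNReal.ofReal_mul (Real.rpow_nonneg (hd.trans (mem_ball.1 hz)).le α)]
  refine ENNReal.ofReal_le_ofReal ?_
  calc f z = dist z x ^ α * (f z / dist z x ^ α) := by field_simp
    _ ≤ r ^ α * (f z / dist z x ^ α) := by
        gcongr
        exact (mem_ball.1 hz).le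

theorem volume_ball_inv_mul_ofReal_rpow {n : ℕ} (x : EuclideanSpace ℝ (Fin n)) {r : ℝ}
    (hr : 0 < r) (β : ℝ) :
    (volume (ball x r))⁻¹ * ENNReal.ofReal (r ^ ((n : ℝ) + β)) =
      ENNReal.ofReal ((volume (ball (0 : EuclideanSpace ℝ (Fin n)) 1)).toReal⁻¹ * r ^ β) := by
  set ν := volume (ball (0 : EuclideanSpace ℝ (Fin n)) 1)
  have hν : 0 < ν.toReal :=
    ENNReal.toReal_pos (measure_ball_pos _ _ one_pos).ne' measure_ball_lt_top.ne
  have hvol : volume (ball x r) = ENNReal.ofReal (r ^ n * ν.toReal) := by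
    rw [Measure.addHaar_ball_of_pos volume x hr, finrank_euclideanSpace_fin,
      ENNReal.ofReal_mul (by positivity), ENNReal.ofReal_toReal measure_ball_lt_top.ne]
  rw [hvol, ← ENNReal.ofReal_inv_of_pos (by positivity), ← ENNReal.ofReal_mul (by positivity),
    Real.rpow_add hr, Real.rpow_natCast]
  congr 1
  field_simp

theorem average_dist_median_le_general (n : ℕ) (s p γ : ℝ)
    (hs0 : 0 < s) (hp0 : 0 < p) (hp1 : p < 1)
    (hγ0 : 0 < γ) (hγ : γ ≤ 1/2)
    (u : EuclideanSpace ℝ (Fin n) → ℝ) (humeas : Measurable u) :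
    ∃ C : ℝ, 0 < C ∧ ∀ (j : ℕ) (x : EuclideanSpace ℝ (Fin n)),
      (volume (ball x ((2:ℝ) ^ (-(j : ℝ)))))⁻¹ *
        ∫⁻ z in ball x ((2:ℝ) ^ (-(j : ℝ))),
          ENNReal.ofReal (|u z - med volume γ u (ball x ((2:ℝ) ^ (-(j : ℝ))))| ^ p) ≤
      ENNReal.ofReal (C * (2:ℝ) ^ (-(j : ℝ) * s * p)) *
        ∫⁻ z in ball x ((2:ℝ) ^ (-(j : ℝ))),
          ENNReal.ofReal (|u z - u x| ^ p / dist z x ^ ((n : ℝ) + s * p)) := by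
  set ν := volume (ball (0 : EuclideanSpace ℝ (Fin n)) 1)
  have hν : 0 < ν.toReal :=
    ENNReal.toReal_pos (measure_ball_pos _ _ one_pos).ne' measure_ball_lt_top.ne
  refine ⟨(1 + γ⁻¹) * ν.toReal⁻¹, by positivity, fun j x => ?_⟩
  set r : ℝ := (2:ℝ) ^ (-(j : ℝ))
  have hr : 0 < r := by positivity
  set J := ∫⁻ z in ball x r, ENNReal.ofReal (|u z - u x| ^ p / dist z x ^ ((n : ℝ) + s * p))
  have hdev := setLIntegral_rpow_abs_sub_med_le humeas measurableSet_ball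
    (measure_ball_pos volume x hr).ne' (measure_ball_lt_top (μ := volume)).ne hγ0 hγ hp0.le hp1.le
    (u x)
  have hkernel : ∫⁻ z in ball x r, ENNReal.ofReal (|u z - u x| ^ p) ≤
      ENNReal.ofReal (r ^ ((n : ℝ) + s * p)) * J :=
    setLIntegral_ball_le_rpow_mul volume (by positivity) (by simp [Real.zero_rpow hp0.ne'])
  have hrsp : r ^ (s * p) = (2:ℝ) ^ (-(j : ℝ) * s * p) := by
    rw [← Real.rpow_mul zero_le_two, mul_assoc]
  calc (volume (ball x r))⁻¹ *
        ∫⁻ z in ball x r, ENNReal.ofReal (|u z - med volume γ u (ball x r)| ^ p)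
      ≤ (volume (ball x r))⁻¹ *
          (ENNReal.ofReal (1 + γ⁻¹) * (ENNReal.ofReal (r ^ ((n : ℝ) + s * p)) * J)) := by
        gcongr
        exact hdev.trans (mul_le_mul_right hkernel _)
    _ = ENNReal.ofReal (1 + γ⁻¹) *
          ((volume (ball x r))⁻¹ * ENNReal.ofReal (r ^ ((n : ℝ) + s * p))) * J := by
        ring
    _ = ENNReal.ofReal ((1 + γ⁻¹) * ν.toReal⁻¹ * (2:ℝ) ^ (-(j : ℝ) * s * p)) * J := by
        rw [volume_ball_inv_mul_ofReal_rpow x hr, ← ENNReal.ofReal_mul (by positivity), hrsp,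
          ← mul_assoc]

/-- for every `j` and `x`,
`⨍_{B(x,2^{-j})} |u(z) - m_u^γ(B(x,2^{-j}))|^p dz ≤ C 2^{-jsp} ∫_{B(x,2^{-j})} |u(z)-u(x)|^p/|z-x|^{n+sp} dz`. -/
theorem average_dist_median_le (n : ℕ) (s p γ : ℝ)
    (hs0 : 0 < s) (hs1 : s < 1) (hp0 : 0 < p) (hp1 : p < 1)
    (hγ0 : 0 < γ) (hγ : γ ≤ 1/2)
    (u : EuclideanSpace ℝ (Fin n) → ℝ) (humeas : Measurable u) :
    ∃ C : ℝ, 0 < C ∧ ∀ (j : ℕ) (x : EuclideanSpace ℝ (Fin n)),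
      (volume (ball x ((2:ℝ) ^ (-(j : ℝ)))))⁻¹ *
        ∫⁻ z in ball x ((2:ℝ) ^ (-(j : ℝ))),
          ENNReal.ofReal (|u z - med volume γ u (ball x ((2:ℝ) ^ (-(j : ℝ))))| ^ p) ≤
      ENNReal.ofReal (C * (2:ℝ) ^ (-(j : ℝ) * s * p)) *
        ∫⁻ z in ball x ((2:ℝ) ^ (-(j : ℝ))),
          ENNReal.ofReal (|u z - u x| ^ p / dist z x ^ ((n : ℝ) + s * p)) :=
  average_dist_median_le_general n s p γ hs0 hp0 hp1 hγ0 hγ u humeas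
end

section
/- Let s,p ∈ (0,1), n ∈ ℕ, 0<γ≤1/2, let u ∈ W^{s,p}(ℝ^n), and define g(x) = sup_{j∈ℕ} 2^{js}·(⨍_{B(x,2^{−j})} |u(z) − m_u^γ(B(x,2^{−j}))|^p dz)^{1/p}. Then there is a constant C (depending only on n, s, p, γ) such that for every x ∈ ℝ^n and all l,m ∈ ℕ with l>m, |m_u^γ(B(x,2^{−l})) − m_u^γ(B(x,2^{−m}))| ≤ C·Σ_{j=m}^{l−1} 2^{−j(s−n/p)}·(∫_{B(x,2^{−j})} g(z)^p dz)^{1/p}. -/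
open MeasureTheory Metric Set Filter ENNReal

/-- Membership in the fractional Sobolev space `W^{s,p}(ℝ^n)`. -/
def MemWsp (n : ℕ) (s p : ℝ) (u : EuclideanSpace ℝ (Fin n) → ℝ) : Prop :=
  MemLp u (ENNReal.ofReal p) volume ∧
  (∫⁻ x, ∫⁻ y, ENNReal.ofReal (|u x - u y| ^ p / dist x y ^ ((n : ℝ) + s * p))) < ∞

/-- The maximal-type function
`g(x) = sup_j 2^{js} (⨍_{B(x,2^{-j})} |u(z) - m_u^γ(B(x,2^{-j}))|^p dz)^{1/p}`. -/
noncomputable def gFun (n : ℕ) (s p γ : ℝ) (u : EuclideanSpace ℝ (Fin n) → ℝ)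
    (x : EuclideanSpace ℝ (Fin n)) : ℝ≥0∞ :=
  ⨆ j : ℕ, ENNReal.ofReal ((2:ℝ) ^ ((j : ℝ) * s)) *
    ((volume (ball x ((2:ℝ) ^ (-(j : ℝ)))))⁻¹ *
      ∫⁻ z in ball x ((2:ℝ) ^ (-(j : ℝ))),
        ENNReal.ofReal (|u z - med volume γ u (ball x ((2:ℝ) ^ (-(j : ℝ))))| ^ p)) ^ (1 / p)

/-! At least a `γ`-fraction of `A` lies at distance `≥ |m_u^γ(A) - c| / 2` from any constant `c`
(when the median exceeds `c` this uses `γ ≤ 1/2`), so by Chebyshev's inequality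
`|m_u^γ(A) - c|^p ≤ (2^p/γ) ⨍_A |u - c|^p`. Applied to a ball inside `B(z, r)` with `c` the
median of `B(z, r)`, this bounds medians of sub-balls by the oscillation that defines `g(z)`.
To compare `B(x, r/2)` with `B(x, r)`, cover `B(x, r)` by boundedly many balls of radius `r/4`;
each of them lies in `B(z, r)` together with `B(x, r/2)` for all `z` in some ball of radius
`r/16` inside `B(x, r)`, and averaging over those `z` turns the pointwise bounds into
`∫_{B(x,r)} g^p`. For `0 < p ≤ 1`, `|a - c|^p ≤ |a - b|^p + |b - c|^p` lets the pieces add up;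
the chain estimate then follows by telescoping over dyadic radii. -/

open Topology

lemma ofReal_abs_sub_rpow_le {p : ℝ} (hp0 : 0 ≤ p) (hp1 : p ≤ 1) (a b c : ℝ) :
    ENNReal.ofReal (|a - c| ^ p) ≤
      ENNReal.ofReal (|a - b| ^ p) + ENNReal.ofReal (|b - c| ^ p) := by
  rw [← ENNReal.ofReal_add (by positivity) (by positivity)]
  refine ENNReal.ofReal_le_ofReal
    ((Real.rpow_le_rpow (abs_nonneg _) (abs_sub_le a b c) hp0).trans ?_)
  exact Real.rpow_add_le_add_rpow (abs_nonneg _) (abs_nonneg _) hp0 hp1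

lemma setLIntegral_abs_sub_rpow_le {X : Type*} [MeasurableSpace X] {μ : Measure X} {p : ℝ}
    (hp0 : 0 ≤ p) (hp1 : p ≤ 1) (u : X → ℝ) (A : Set X) (b c : ℝ) :
    ∫⁻ x in A, ENNReal.ofReal (|u x - c| ^ p) ∂μ ≤
      ∫⁻ x in A, ENNReal.ofReal (|u x - b| ^ p) ∂μ +
        μ A * ENNReal.ofReal (|b - c| ^ p) := by
  calc ∫⁻ x in A, ENNReal.ofReal (|u x - c| ^ p) ∂μ
      ≤ ∫⁻ x in A, (ENNReal.ofReal (|u x - b| ^ p) + ENNReal.ofReal (|b - c| ^ p)) ∂μ :=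
        lintegral_mono fun x => ofReal_abs_sub_rpow_le hp0 hp1 _ _ _
    _ = _ := by rw [lintegral_add_right' _ aemeasurable_const, setLIntegral_const, mul_comm]

lemma le_inv_measure_mul_setLIntegral_of_forall_le {X : Type*} [MeasurableSpace X]
    {μ : Measure X} {S S' : Set X} {F : X → ℝ≥0∞} {Q : ℝ≥0∞} (hS : MeasurableSet S)
    (hS0 : μ S ≠ 0) (hSfin : μ S ≠ ∞) (hSS' : S ⊆ S') (hQ : ∀ z ∈ S, Q ≤ F z) :
    Q ≤ (μ S)⁻¹ * ∫⁻ z in S', F z ∂μ :=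
  calc Q = (μ S)⁻¹ * ∫⁻ _ in S, Q ∂μ := by
        rw [setLIntegral_const, mul_comm, mul_assoc, ENNReal.mul_inv_cancel hS0 hSfin, mul_one]
    _ ≤ (μ S)⁻¹ * ∫⁻ z in S, F z ∂μ := mul_le_mul_right (setLIntegral_mono' hS hQ) _
    _ ≤ (μ S)⁻¹ * ∫⁻ z in S', F z ∂μ := mul_le_mul_right (lintegral_mono_set hSS') _

lemma setLIntegral_biUnion_finset_le_card_mul {X ι : Type*} [MeasurableSpace X]
    {μ : Measure X} {f : X → ℝ≥0∞} {s : ι → Set X} {B : ℝ≥0∞} (T : Finset ι)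
    (h : ∀ i ∈ T, ∫⁻ x in s i, f x ∂μ ≤ B) :
    ∫⁻ x in ⋃ i ∈ T, s i, f x ∂μ ≤ T.card * B := by
  classical
  induction T using Finset.induction with
  | empty => simp
  | insert a T haT ih =>
    rw [Finset.set_biUnion_insert, Finset.card_insert_of_notMem haT, Nat.cast_succ, add_mul,
      one_mul, add_comm _ B]
    exact (lintegral_union_le _ _ _).trans (add_le_add (h a (Finset.mem_insert_self a T))
      (ih fun i hi => h i (Finset.mem_insert_of_mem hi)))

lemma sep_lt_subset_sep_lt {X : Type*} {u : X → ℝ} {A : Set X} {M M' : ℝ} (h : M ≤ M') :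
    {x ∈ A | u x < M} ⊆ {x ∈ A | u x < M'} :=
  fun _ hx => ⟨hx.1, hx.2.trans_le h⟩

section Median

variable {X : Type*} [MeasurableSpace X] {μ : Measure X} {γ p : ℝ} {u : X → ℝ} {A : Set X}

lemma measure_sep_lt_le_of_lt_med (hγ0 : 0 < γ) (hu : Measurable u) (hA : MeasurableSet A)
    (hAfin : μ A ≠ ∞) {M : ℝ} (hM : M < med μ γ u A) :
    μ {x ∈ A | u x < M} ≤ ENNReal.ofReal γ * μ A := by
  rcases eq_or_ne (μ A) 0 with hA0 | hA0
  · exact (measure_mono fun _ hx => hx.1).trans (by simp [hA0])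
  have hlim : Tendsto (fun M : ℝ => μ {x ∈ A | u x < -M}) atTop (𝓝 0) := by
    have h := tendsto_measure_iInter_atTop (μ := μ) (s := fun M : ℝ => {x ∈ A | u x < -M})
      (fun M => (hA.inter (hu measurableSet_Iio)).nullMeasurableSet)
      (fun M M' h => sep_lt_subset_sep_lt (neg_le_neg h))
      ⟨0, ne_top_of_le_ne_top hAfin (measure_mono fun _ hx => hx.1)⟩
    have hempty : ⋂ M : ℝ, {x ∈ A | u x < -M} = ∅ :=
      eq_empty_of_forall_notMem fun x hx => (mem_iInter.mp hx (-u x)).2.ne (by rw [neg_neg])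
    rwa [hempty, measure_empty] at h
  have hpos : 0 < ENNReal.ofReal γ * μ A :=
    ENNReal.mul_pos (ENNReal.ofReal_pos.mpr hγ0).ne' hA0
  obtain ⟨M₀, hM₀⟩ := (hlim.eventually (gt_mem_nhds hpos)).exists
  obtain ⟨M', hM'S, hMM'⟩ := exists_lt_of_lt_csSup ⟨-M₀, hM₀.le⟩ hM
  exact (measure_mono (sep_lt_subset_sep_lt hMM'.le)).trans hM'S

lemma lt_measure_sep_lt_of_med_lt (hγ1 : γ < 1) (hA0 : μ A ≠ 0) (hAfin : μ A ≠ ∞)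
    {M : ℝ} (hM : med μ γ u A < M) :
    ENNReal.ofReal γ * μ A < μ {x ∈ A | u x < M} := by
  have hlim : Tendsto (fun M : ℝ => μ {x ∈ A | u x < M}) atTop (𝓝 (μ A)) := by
    have h := tendsto_measure_iUnion_atTop (μ := μ) (s := fun M : ℝ => {x ∈ A | u x < M})
      (fun M M' h => sep_lt_subset_sep_lt h)
    have hunion : ⋃ M : ℝ, {x ∈ A | u x < M} = A :=
      Subset.antisymm (iUnion_subset fun M _ hx => hx.1)
        fun x hx => mem_iUnion.mpr ⟨u x + 1, hx, lt_add_one _⟩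
    rwa [hunion] at h
  have hlt : ENNReal.ofReal γ * μ A < μ A :=
    calc ENNReal.ofReal γ * μ A < 1 * μ A :=
          ENNReal.mul_lt_mul_left hA0 hAfin (ENNReal.ofReal_lt_one.mpr hγ1)
      _ = μ A := one_mul _
  obtain ⟨M₀, hM₀⟩ := (hlim.eventually (lt_mem_nhds hlt)).exists
  have hbdd : BddAbove {M : ℝ | μ {x ∈ A | u x < M} ≤ ENNReal.ofReal γ * μ A} :=
    ⟨M₀, fun M hM => le_of_not_gt fun h =>
      (hM₀.trans_le (measure_mono (sep_lt_subset_sep_lt h.le))).not_ge hM⟩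
  exact lt_of_not_ge fun h => (le_csSup hbdd h).not_gt hM

lemma ofReal_mul_measure_le_measure_far_from (hγ0 : 0 < γ) (hγ : γ ≤ 1 / 2)
    (hu : Measurable u) (hA : MeasurableSet A) (hA0 : μ A ≠ 0) (hAfin : μ A ≠ ∞) (c : ℝ) :
    ENNReal.ofReal γ * μ A ≤ μ {x ∈ A | |med μ γ u A - c| / 2 ≤ |u x - c|} := by
  have hγ1 : γ < 1 := by linarith
  set m := med μ γ u A
  rcases lt_trichotomy m c with hmc | rfl | hcm
  · refine (lt_measure_sep_lt_of_med_lt (u := u) hγ1 hA0 hAfin (M := (m + c) / 2)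
      (by linarith)).le.trans (measure_mono fun x hx => ⟨hx.1, ?_⟩)
    rw [abs_of_neg (sub_neg.mpr hmc), abs_of_neg (by linarith [hx.2])]
    linarith [hx.2]
  · refine (mul_le_of_le_one_left' ?_).trans (measure_mono fun x hx => ⟨hx, by simp⟩)
    exact ENNReal.ofReal_le_one.mpr hγ1.le
  · set B := {x ∈ A | u x < (m + c) / 2}
    have hB : μ B ≤ ENNReal.ofReal γ * μ A :=
      measure_sep_lt_le_of_lt_med hγ0 hu hA hAfin (by linarith)
    have hγA : ENNReal.ofReal γ * μ A ≤ μ A - ENNReal.ofReal γ * μ A := by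
      refine ENNReal.le_sub_of_add_le_left (ENNReal.mul_ne_top ENNReal.ofReal_ne_top hAfin) ?_
      rw [← add_mul, ← ENNReal.ofReal_add hγ0.le hγ0.le]
      exact mul_le_of_le_one_left' (ENNReal.ofReal_le_one.mpr (by linarith))
    refine (hγA.trans ((tsub_le_tsub_left hB _).trans le_measure_sdiff)).trans
      (measure_mono fun x hx => ⟨hx.1, ?_⟩)
    have hx' : (m + c) / 2 ≤ u x := not_lt.mp fun h => hx.2 ⟨hx.1, h⟩
    rw [abs_of_pos (sub_pos.mpr hcm), abs_of_nonneg (by linarith)]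
    linarith

theorem abs_med_sub_rpow_le (hp : 0 < p) (hγ0 : 0 < γ) (hγ : γ ≤ 1 / 2) (hu : Measurable u)
    (hA : MeasurableSet A) (hA0 : μ A ≠ 0) (hAfin : μ A ≠ ∞) (c : ℝ) :
    ENNReal.ofReal (|med μ γ u A - c| ^ p) ≤
      ENNReal.ofReal (2 ^ p / γ) *
        ((μ A)⁻¹ * ∫⁻ x in A, ENNReal.ofReal (|u x - c| ^ p) ∂μ) := by
  set d := |med μ γ u A - c|
  set ε := ENNReal.ofReal ((d / 2) ^ p)
  set f := fun x => ENNReal.ofReal (|u x - c| ^ p)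
  have hγA0 : ENNReal.ofReal γ * μ A ≠ 0 := mul_ne_zero (by simpa using hγ0) hA0
  have hγAfin : ENNReal.ofReal γ * μ A ≠ ∞ := ENNReal.mul_ne_top ENNReal.ofReal_ne_top hAfin
  have hfar : {x ∈ A | d / 2 ≤ |u x - c|} ⊆ {x | ε ≤ f x} ∩ A :=
    fun x hx => ⟨ENNReal.ofReal_le_ofReal (Real.rpow_le_rpow (by positivity) hx.2 hp.le), hx.1⟩
  have hmarkov : ENNReal.ofReal γ * μ A * ε ≤ ∫⁻ x in A, f x ∂μ :=
    calc ENNReal.ofReal γ * μ A * ε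
        ≤ ε * μ {x ∈ A | d / 2 ≤ |u x - c|} := by
          rw [mul_comm]
          gcongr
          exact ofReal_mul_measure_le_measure_far_from hγ0 hγ hu hA hA0 hAfin c
      _ ≤ ε * μ.restrict A {x | ε ≤ f x} :=
          mul_le_mul_right ((measure_mono hfar).trans (Measure.le_restrict_apply _ _)) _
      _ ≤ ∫⁻ x in A, f x ∂μ := mul_meas_ge_le_lintegral₀ (by fun_prop) ε
  have hdp : ENNReal.ofReal (d ^ p) = ENNReal.ofReal (2 ^ p) * ε := by
    rw [← ENNReal.ofReal_mul (by positivity), ← Real.mul_rpow (by norm_num) (by positivity)]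
    ring_nf
  rw [hdp, ENNReal.ofReal_div_of_pos hγ0, div_eq_mul_inv, mul_assoc, ← mul_assoc _ (μ A)⁻¹,
    ← ENNReal.mul_inv (Or.inr hAfin) (Or.inl ENNReal.ofReal_ne_top)]
  exact mul_le_mul_right ((ENNReal.mul_le_iff_le_inv hγA0 hγAfin).mp hmarkov) _

theorem setLIntegral_abs_sub_med_rpow_le (hp0 : 0 < p) (hp1 : p ≤ 1) (hγ0 : 0 < γ)
    (hγ : γ ≤ 1 / 2) (hu : Measurable u) (hA : MeasurableSet A) (hA0 : μ A ≠ 0)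
    (hAfin : μ A ≠ ∞) {B A' : Set X} (hBA' : B ⊆ A') (hAA' : A ⊆ A')
    (hBA : μ B ≤ μ A) :
    ∫⁻ x in B, ENNReal.ofReal (|u x - med μ γ u A| ^ p) ∂μ ≤
      (1 + ENNReal.ofReal (2 ^ p / γ)) *
        ∫⁻ x in A', ENNReal.ofReal (|u x - med μ γ u A'| ^ p) ∂μ := by
  set m' := med μ γ u A'
  set I := ∫⁻ x in A', ENNReal.ofReal (|u x - m'| ^ p) ∂μ
  set κ := ENNReal.ofReal (2 ^ p / γ)
  calc ∫⁻ x in B, ENNReal.ofReal (|u x - med μ γ u A| ^ p) ∂μ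
      ≤ ∫⁻ x in B, ENNReal.ofReal (|u x - m'| ^ p) ∂μ +
          μ B * ENNReal.ofReal (|m' - med μ γ u A| ^ p) :=
        setLIntegral_abs_sub_rpow_le hp0.le hp1 u B m' _
    _ ≤ I + μ A * (κ * ((μ A)⁻¹ * I)) := by
        gcongr ?_ + ?_ * ?_
        · exact lintegral_mono_set hBA'
        · rw [abs_sub_comm]
          refine (abs_med_sub_rpow_le hp0 hγ0 hγ hu hA hA0 hAfin m').trans ?_
          gcongr
          exact lintegral_mono_set hAA'
    _ = (1 + κ) * I := by
        rw [mul_left_comm, ← mul_assoc (μ A), ENNReal.mul_inv_cancel hA0 hAfin, one_mul]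
        ring

end Median

noncomputable def medianOscillation {X : Type*} [PseudoMetricSpace X] [MeasurableSpace X]
    (μ : Measure X) (γ p : ℝ) (u : X → ℝ) (r : ℝ) (z : X) : ℝ≥0∞ :=
  (μ (ball z r))⁻¹ *
    ∫⁻ w in ball z r, ENNReal.ofReal (|u w - med μ γ u (ball z r)| ^ p) ∂μ

lemma measure_ball_mul_medianOscillation {X : Type*} [PseudoMetricSpace X] [MeasurableSpace X]
    {μ : Measure X} {γ p r : ℝ} {u : X → ℝ} {z : X} (h0 : μ (ball z r) ≠ 0)
    (hfin : μ (ball z r) ≠ ∞) :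
    μ (ball z r) * medianOscillation μ γ p u r z =
      ∫⁻ w in ball z r, ENNReal.ofReal (|u w - med μ γ u (ball z r)| ^ p) ∂μ := by
  rw [medianOscillation, ← mul_assoc, ENNReal.mul_inv_cancel h0 hfin, one_mul]

lemma exists_finset_ball_subset_iUnion_quarter_balls (E : Type*) [NormedAddCommGroup E]
    [NormedSpace ℝ E] [ProperSpace E] :
    ∃ T : Finset E, (∀ y ∈ T, ‖y‖ ≤ 1) ∧
      ∀ (x : E) {r : ℝ}, 0 < r → ball x r ⊆ ⋃ y ∈ T, ball (x + r • y) (r / 4) := by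
  obtain ⟨t, ht1, htfin, hcov⟩ :=
    finite_cover_balls_of_compact (isCompact_closedBall (0 : E) 1) (by norm_num : (0 : ℝ) < 1 / 4)
  refine ⟨htfin.toFinset, fun y hy => by simpa using ht1 (htfin.mem_toFinset.mp hy),
    fun x r hr a ha => ?_⟩
  have ha' : r⁻¹ • (a - x) ∈ closedBall (0 : E) 1 := by
    rw [mem_closedBall_zero_iff, norm_smul, Real.norm_of_nonneg (inv_nonneg.2 hr.le),
      ← dist_eq_norm]
    exact (inv_mul_le_one₀ hr).mpr (mem_ball.mp ha).le
  obtain ⟨y, hyt, hy⟩ := mem_iUnion₂.mp (hcov ha')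
  refine mem_iUnion₂.mpr ⟨y, htfin.mem_toFinset.mpr hyt, ?_⟩
  rw [mem_ball, dist_eq_norm] at hy ⊢
  have hrescale : a - (x + r • y) = r • (r⁻¹ • (a - x) - y) := by
    rw [smul_sub, smul_smul, mul_inv_cancel₀ hr.ne', one_smul]; abel
  rw [hrescale, norm_smul, Real.norm_of_nonneg hr.le]
  nlinarith

lemma dist_add_smul_add_smul {E : Type*} [NormedAddCommGroup E] [NormedSpace ℝ E]
    (x y : E) (a b : ℝ) : dist (x + a • y) (x + b • y) = |a - b| * ‖y‖ := by
  rw [dist_add_left, dist_eq_norm, ← sub_smul, norm_smul, Real.norm_eq_abs]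

lemma measure_ball_eq_measure_ball {E : Type*} [NormedAddCommGroup E] [MeasurableSpace E]
    [BorelSpace E] (μ : Measure E) [μ.IsAddHaarMeasure] (x y : E) (r : ℝ) :
    μ (ball x r) = μ (ball y r) := by
  rw [Measure.addHaar_ball_center μ x, Measure.addHaar_ball_center μ y]

section HaarMeasure

variable {E : Type*} [NormedAddCommGroup E] [NormedSpace ℝ E] [MeasurableSpace E]
  [BorelSpace E] [FiniteDimensional ℝ E] {μ : Measure E} [μ.IsAddHaarMeasure] {γ p : ℝ}
  {u : E → ℝ}

lemma setLIntegral_quarter_ball_abs_sub_med_half_ball_le (hp0 : 0 < p) (hp1 : p ≤ 1)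
    (hγ0 : 0 < γ) (hγ : γ ≤ 1 / 2) (hu : Measurable u) (x : E) {y : E} (hy : ‖y‖ ≤ 1)
    {r : ℝ} (hr : 0 < r) :
    ∫⁻ w in ball (x + r • y) (r / 4),
        ENNReal.ofReal (|u w - med μ γ u (ball x (r / 2))| ^ p) ∂μ ≤
      (1 + ENNReal.ofReal (2 ^ p / γ)) * μ (ball x r) *
        ((μ (ball x (r / 16)))⁻¹ *
          ∫⁻ z in ball x r, medianOscillation μ γ p u r z ∂μ) := by
  -- `B(q, r/16) ⊆ B(x, r)`, and `B(z, r) ⊇ B(x, r/2) ∪ B(x + r • y, r/4)`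
  -- for every `z ∈ B(q, r/16)`.
  set q := x + (3 / 8 * r) • y
  have hdist : ∀ a : ℝ, dist (x + a • y) q ≤ |a - 3 / 8 * r| := fun a => by
    rw [dist_add_smul_add_smul]
    exact mul_le_of_le_one_right (abs_nonneg _) hy
  have hqx : dist x q ≤ 3 / 8 * r := by
    have := hdist 0
    rwa [zero_smul, add_zero, zero_sub, abs_neg, abs_of_pos (by positivity)] at this
  have hqw : dist (x + r • y) q ≤ 5 / 8 * r := by
    have := hdist r
    rw [abs_of_pos (by linarith)] at this
    linarith
  rw [measure_ball_eq_measure_ball μ x q (r / 16), mul_left_comm,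
    ← lintegral_const_mul' _ _ (ENNReal.mul_ne_top (by finiteness) measure_ball_lt_top.ne)]
  refine le_inv_measure_mul_setLIntegral_of_forall_le measurableSet_ball
    (measure_ball_pos μ q (by positivity)).ne' measure_ball_lt_top.ne
    (ball_subset_ball' (by rw [dist_comm]; linarith)) fun z hz => ?_
  rw [mem_ball, dist_comm] at hz
  rw [measure_ball_eq_measure_ball μ x z r, mul_assoc, measure_ball_mul_medianOscillation
    (measure_ball_pos μ z hr).ne' measure_ball_lt_top.ne]
  refine setLIntegral_abs_sub_med_rpow_le hp0 hp1 hγ0 hγ hu measurableSet_ball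
    (measure_ball_pos μ x (by positivity)).ne' measure_ball_lt_top.ne
    (ball_subset_ball' (by linarith [dist_triangle (x + r • y) q z]))
    (ball_subset_ball' (by linarith [dist_triangle x q z])) ?_
  rw [measure_ball_eq_measure_ball μ (x + r • y) x]
  exact measure_mono (ball_subset_ball (by linarith))

theorem abs_med_half_ball_sub_rpow_le (hp0 : 0 < p) (hp1 : p ≤ 1) (hγ0 : 0 < γ)
    (hγ : γ ≤ 1 / 2) (hu : Measurable u) {T : Finset E} (hT : ∀ y ∈ T, ‖y‖ ≤ 1)
    (hcov : ∀ (x : E) {r : ℝ}, 0 < r → ball x r ⊆ ⋃ y ∈ T, ball (x + r • y) (r / 4))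
    (x : E) {r : ℝ} (hr : 0 < r) :
    ENNReal.ofReal (|med μ γ u (ball x (r / 2)) - med μ γ u (ball x r)| ^ p) ≤
      ENNReal.ofReal (2 ^ p / γ) * (1 + ENNReal.ofReal (2 ^ p / γ)) * T.card *
        ((μ (ball x (r / 16)))⁻¹ *
          ∫⁻ z in ball x r, medianOscillation μ γ p u r z ∂μ) := by
  set κ := ENNReal.ofReal (2 ^ p / γ)
  set V := μ (ball x r)
  set b := med μ γ u (ball x (r / 2))
  set avg :=
    (μ (ball x (r / 16)))⁻¹ * ∫⁻ z in ball x r, medianOscillation μ γ p u r z ∂μ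
  have hV0 : V ≠ 0 := (measure_ball_pos μ x hr).ne'
  have hVfin : V ≠ ∞ := measure_ball_lt_top.ne
  have hcovered : ∫⁻ w in ball x r, ENNReal.ofReal (|u w - b| ^ p) ∂μ ≤
      T.card * ((1 + κ) * V * avg) :=
    (lintegral_mono_set (hcov x hr)).trans <| setLIntegral_biUnion_finset_le_card_mul T
      fun y hy =>
        setLIntegral_quarter_ball_abs_sub_med_half_ball_le hp0 hp1 hγ0 hγ hu x (hT y hy) hr
  calc ENNReal.ofReal (|b - med μ γ u (ball x r)| ^ p)
      = ENNReal.ofReal (|med μ γ u (ball x r) - b| ^ p) := by rw [abs_sub_comm]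
    _ ≤ κ * (V⁻¹ * ∫⁻ w in ball x r, ENNReal.ofReal (|u w - b| ^ p) ∂μ) :=
        abs_med_sub_rpow_le hp0 hγ0 hγ hu measurableSet_ball hV0 hVfin b
    _ ≤ κ * (V⁻¹ * (T.card * ((1 + κ) * V * avg))) := by gcongr
    _ = κ * (1 + κ) * T.card * (V⁻¹ * V) * avg := by ring
    _ = κ * (1 + κ) * T.card * avg := by rw [ENNReal.inv_mul_cancel hV0 hVfin, mul_one]

end HaarMeasure

section Euclidean

variable {n : ℕ} {s p γ : ℝ} {u : EuclideanSpace ℝ (Fin n) → ℝ}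

lemma medianOscillation_le_gFun (hp : 0 < p) (z : EuclideanSpace ℝ (Fin n)) (j : ℕ) :
    ENNReal.ofReal ((2 : ℝ) ^ ((j : ℝ) * s)) ^ p *
        medianOscillation volume γ p u ((2 : ℝ) ^ (-(j : ℝ))) z ≤ gFun n s p γ u z ^ p := by
  have h : ENNReal.ofReal ((2 : ℝ) ^ ((j : ℝ) * s)) *
      medianOscillation volume γ p u ((2 : ℝ) ^ (-(j : ℝ))) z ^ (1 / p) ≤
        gFun n s p γ u z :=
    le_iSup (fun j : ℕ => ENNReal.ofReal ((2 : ℝ) ^ ((j : ℝ) * s)) *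
      medianOscillation volume γ p u ((2 : ℝ) ^ (-(j : ℝ))) z ^ (1 / p)) j
  calc ENNReal.ofReal ((2 : ℝ) ^ ((j : ℝ) * s)) ^ p *
        medianOscillation volume γ p u ((2 : ℝ) ^ (-(j : ℝ))) z
      = (ENNReal.ofReal ((2 : ℝ) ^ ((j : ℝ) * s)) *
          medianOscillation volume γ p u ((2 : ℝ) ^ (-(j : ℝ))) z ^ (1 / p)) ^ p := by
        rw [ENNReal.mul_rpow_of_nonneg _ _ hp.le, ← ENNReal.rpow_mul, one_div_mul_cancel hp.ne',
          ENNReal.rpow_one]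
    _ ≤ gFun n s p γ u z ^ p := ENNReal.rpow_le_rpow h hp.le

theorem abs_med_dyadic_sub_rpow_le (hp0 : 0 < p) (hp1 : p ≤ 1) (hγ0 : 0 < γ)
    (hγ : γ ≤ 1 / 2) (hu : Measurable u) {T : Finset (EuclideanSpace ℝ (Fin n))}
    (hT : ∀ y ∈ T, ‖y‖ ≤ 1)
    (hcov : ∀ (x : EuclideanSpace ℝ (Fin n)) {r : ℝ}, 0 < r →
      ball x r ⊆ ⋃ y ∈ T, ball (x + r • y) (r / 4))
    (x : EuclideanSpace ℝ (Fin n)) (j : ℕ) :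
    ENNReal.ofReal (|med volume γ u (ball x ((2 : ℝ) ^ (-(j : ℝ)) / 2)) -
        med volume γ u (ball x ((2 : ℝ) ^ (-(j : ℝ))))| ^ p) ≤
      ENNReal.ofReal (2 ^ p / γ) * (1 + ENNReal.ofReal (2 ^ p / γ)) * T.card *
        (volume (ball (0 : EuclideanSpace ℝ (Fin n)) 16⁻¹))⁻¹ *
        (ENNReal.ofReal ((2 : ℝ) ^ (-(j : ℝ) * (s - n / p))) ^ p *
          ∫⁻ z in ball x ((2 : ℝ) ^ (-(j : ℝ))), gFun n s p γ u z ^ p) := by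
  set r := (2 : ℝ) ^ (-(j : ℝ))
  have hr : 0 < r := by positivity
  set a := ENNReal.ofReal ((2 : ℝ) ^ ((j : ℝ) * s)) ^ p
  have ha0 : a ≠ 0 := by simp [a, hp0, Real.rpow_pos_of_pos two_pos]
  have hosc : ∫⁻ z in ball x r, medianOscillation volume γ p u r z ≤
      a⁻¹ * ∫⁻ z in ball x r, gFun n s p γ u z ^ p := by
    rw [← lintegral_const_mul' _ _ (ENNReal.inv_ne_top.mpr ha0)]
    exact lintegral_mono fun z =>
      (ENNReal.mul_le_iff_le_inv ha0 (by finiteness)).mp (medianOscillation_le_gFun hp0 z j)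
  have hvol : volume (ball x (r / 16)) =
      ENNReal.ofReal (r ^ n) * volume (ball (0 : EuclideanSpace ℝ (Fin n)) 16⁻¹) := by
    rw [div_eq_mul_inv, Measure.addHaar_ball_mul_of_pos _ _ hr, finrank_euclideanSpace_fin]
  have hexp : (r ^ n)⁻¹ * (((2 : ℝ) ^ ((j : ℝ) * s)) ^ p)⁻¹ =
      ((2 : ℝ) ^ (-(j : ℝ) * (s - n / p))) ^ p := by
    simp only [r, ← Real.rpow_natCast, ← Real.rpow_mul zero_le_two,
      ← Real.rpow_neg zero_le_two, ← Real.rpow_add two_pos]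
    congr 1
    field_simp
    ring
  have hscale : (ENNReal.ofReal (r ^ n))⁻¹ * a⁻¹ =
      ENNReal.ofReal ((2 : ℝ) ^ (-(j : ℝ) * (s - n / p))) ^ p := by
    simp only [a]
    rw [ENNReal.ofReal_rpow_of_pos (by positivity), ENNReal.ofReal_rpow_of_pos (by positivity),
      ← ENNReal.ofReal_inv_of_pos (by positivity), ← ENNReal.ofReal_inv_of_pos (by positivity),
      ← ENNReal.ofReal_mul (by positivity), hexp]
  refine (abs_med_half_ball_sub_rpow_le hp0 hp1 hγ0 hγ hu hT hcov x hr).trans ?_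
  rw [hvol, ENNReal.mul_inv (Or.inr measure_ball_lt_top.ne) (Or.inl ENNReal.ofReal_ne_top),
    ← hscale]
  calc _ ≤ ENNReal.ofReal (2 ^ p / γ) * (1 + ENNReal.ofReal (2 ^ p / γ)) * T.card *
        ((ENNReal.ofReal (r ^ n))⁻¹ *
          (volume (ball (0 : EuclideanSpace ℝ (Fin n)) 16⁻¹))⁻¹ *
            (a⁻¹ * ∫⁻ z in ball x r, gFun n s p γ u z ^ p)) := by gcongr
    _ = _ := by ring

theorem exists_edist_med_dyadic_balls_le (hp0 : 0 < p) (hp1 : p ≤ 1) (hγ0 : 0 < γ)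
    (hγ : γ ≤ 1 / 2) (hu : Measurable u) :
    ∃ C : ℝ≥0∞, 0 < C ∧ C < ∞ ∧ ∀ (x : EuclideanSpace ℝ (Fin n)) (j : ℕ),
      edist (med volume γ u (ball x ((2 : ℝ) ^ (-(j : ℝ)))))
          (med volume γ u (ball x ((2 : ℝ) ^ (-((j + 1 : ℕ) : ℝ))))) ≤
        C * (ENNReal.ofReal ((2 : ℝ) ^ (-(j : ℝ) * (s - n / p))) *
          (∫⁻ z in ball x ((2 : ℝ) ^ (-(j : ℝ))), gFun n s p γ u z ^ p) ^ (1 / p)) := by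
  obtain ⟨T, hT, hcov⟩ :=
    exists_finset_ball_subset_iUnion_quarter_balls (EuclideanSpace ℝ (Fin n))
  set K := ENNReal.ofReal (2 ^ p / γ) * (1 + ENNReal.ofReal (2 ^ p / γ)) * T.card *
    (volume (ball (0 : EuclideanSpace ℝ (Fin n)) 16⁻¹))⁻¹
  have hKfin : K ≠ ∞ :=
    ENNReal.mul_ne_top (by finiteness)
      (ENNReal.inv_ne_top.mpr (measure_ball_pos volume _ (by norm_num)).ne')
  refine ⟨(K + 1) ^ (1 / p), ENNReal.rpow_pos (by simp) (by finiteness),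
    ENNReal.rpow_lt_top_of_nonneg (by positivity) (by finiteness), fun x j => ?_⟩
  have hhalf : (2 : ℝ) ^ (-((j + 1 : ℕ) : ℝ)) = (2 : ℝ) ^ (-(j : ℝ)) / 2 := by
    rw [Nat.cast_succ, neg_add, Real.rpow_add two_pos, Real.rpow_neg_one, div_eq_mul_inv]
  rw [hhalf, edist_dist, Real.dist_eq, abs_sub_comm, ← ENNReal.rpow_le_rpow_iff hp0,
    ENNReal.mul_rpow_of_nonneg _ _ hp0.le, ENNReal.mul_rpow_of_nonneg _ _ hp0.le,
    ENNReal.ofReal_rpow_of_nonneg (abs_nonneg _) hp0.le]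
  simp only [← ENNReal.rpow_mul, one_div_mul_cancel hp0.ne', ENNReal.rpow_one]
  exact (abs_med_dyadic_sub_rpow_le hp0 hp1 hγ0 hγ hu hT hcov x j).trans
    (mul_le_mul_left le_self_add _)

end Euclidean

theorem median_chain_estimate_general (n : ℕ) (s p γ : ℝ)
    (hp0 : 0 < p) (hp1 : p < 1)
    (hγ0 : 0 < γ) (hγ : γ ≤ 1/2)
    (u : EuclideanSpace ℝ (Fin n) → ℝ) (humeas : Measurable u) :
    ∃ C : ℝ≥0∞, 0 < C ∧ C < ∞ ∧
      ∀ (x : EuclideanSpace ℝ (Fin n)) (l m : ℕ), m < l →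
        ENNReal.ofReal
            |med volume γ u (ball x ((2:ℝ) ^ (-(l : ℝ)))) -
              med volume γ u (ball x ((2:ℝ) ^ (-(m : ℝ))))| ≤
          C * ∑ j ∈ Finset.Ico m l,
            ENNReal.ofReal ((2:ℝ) ^ (-(j : ℝ) * (s - (n : ℝ) / p))) *
              (∫⁻ z in ball x ((2:ℝ) ^ (-(j : ℝ))), (gFun n s p γ u z) ^ p) ^ (1 / p) := by
  obtain ⟨C, hC0, hCfin, hstep⟩ :=
    exists_edist_med_dyadic_balls_le (s := s) hp0 hp1.le hγ0 hγ humeas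
  refine ⟨C, hC0, hCfin, fun x l m hml => ?_⟩
  set f : ℕ → ℝ := fun j => med volume γ u (ball x ((2:ℝ) ^ (-(j : ℝ))))
  calc ENNReal.ofReal |f l - f m| = edist (f m) (f l) := by
        rw [edist_dist, Real.dist_eq, abs_sub_comm]
    _ ≤ ∑ j ∈ Finset.Ico m l, edist (f j) (f (j + 1)) := edist_le_Ico_sum_edist f hml.le
    _ ≤ _ := by
        rw [Finset.mul_sum]
        exact Finset.sum_le_sum fun j _ => hstep x j

/-- the chain estimate for medians,
`|m_u^γ(B(x,2^{-l})) - m_u^γ(B(x,2^{-m}))| ≤ C ∑_{j=m}^{l-1} 2^{-j(s-n/p)} (∫_{B(x,2^{-j})} g^p)^{1/p}`. -/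
theorem median_chain_estimate (n : ℕ) (s p γ : ℝ)
    (hs0 : 0 < s) (hs1 : s < 1) (hp0 : 0 < p) (hp1 : p < 1)
    (hγ0 : 0 < γ) (hγ : γ ≤ 1/2)
    (u : EuclideanSpace ℝ (Fin n) → ℝ) (humeas : Measurable u) (hu : MemWsp n s p u) :
    ∃ C : ℝ≥0∞, 0 < C ∧ C < ∞ ∧
      ∀ (x : EuclideanSpace ℝ (Fin n)) (l m : ℕ), m < l →
        ENNReal.ofReal
            |med volume γ u (ball x ((2:ℝ) ^ (-(l : ℝ)))) -
              med volume γ u (ball x ((2:ℝ) ^ (-(m : ℝ))))| ≤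
          C * ∑ j ∈ Finset.Ico m l,
            ENNReal.ofReal ((2:ℝ) ^ (-(j : ℝ) * (s - (n : ℝ) / p))) *
              (∫⁻ z in ball x ((2:ℝ) ^ (-(j : ℝ))), (gFun n s p γ u z) ^ p) ^ (1 / p) :=
  median_chain_estimate_general n s p γ hp0 hp1 hγ0 hγ u humeas
end
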